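/- arXiv:2104.14592 — 2 statements merged into one kernel-verified Lean document; each statement's English description precedes it below -/
import Mathlib

section
/- Let (r_n)_{n≥1} be nonnegative with Σ_{n=1}^∞ r_n < ∞, (c_n)_{n≥1} monotone increasing with 1 ≤ c_n, and γ_n = r_n/(r_{n-1} + ⋯ + r_1 + 1). Set h(n) = ∏_{p=1}^{n-1} c_p^{-1}. Then Σ_{j=1}^∞ h(j+1)·γ_j·∏_{p=1}^{j-1}(c_p + γ_p) ≤ Σ_{j=1}^∞ r_j < ∞. -/
open Finset

/-- For `r` nonnegative summable, `c` monotone increasing with `c_n ≥ 1`,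
`γ_n = r_n/(1 + Σ_{i=1}^{n-1} r_i)` and `h(n) = ∏_{p=1}^{n-1} c_p⁻¹`, one has
`Σ_{j=1}^∞ h(j+1)·γ_j·∏_{p=1}^{j-1}(c_p+γ_p) ≤ Σ_{j=1}^∞ r_j < ∞`. -/
theorem sum_h_gamma_prod_le
    (r c γ h : ℕ → ℝ)
    (hr : ∀ n, 0 ≤ r n) (hrsum : Summable r)
    (hc1 : ∀ n, 1 ≤ c n) (hcmono : Monotone c)
    (hγ : ∀ n, γ n = r n / (1 + ∑ i ∈ Finset.Ico 1 n, r i))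
    (hh : ∀ n, h n = ∏ p ∈ Finset.Ico 1 n, (c p)⁻¹) :
    Summable (fun j : ℕ =>
      h (j + 2) * γ (j + 1) * ∏ p ∈ Finset.Ico 1 (j + 1), (c p + γ p)) ∧
    (∑' j : ℕ, h (j + 2) * γ (j + 1) * ∏ p ∈ Finset.Ico 1 (j + 1), (c p + γ p))
      ≤ ∑' j : ℕ, r (j + 1) := by
  have hcpos : ∀ n, (0:ℝ) < c n := fun n => lt_of_lt_of_le one_pos (hc1 n)
  have hSpos : ∀ n, (0:ℝ) < 1 + ∑ i ∈ Finset.Ico 1 n, r i := fun n => by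
    have : 0 ≤ ∑ i ∈ Finset.Ico 1 n, r i := Finset.sum_nonneg fun i _ => hr i
    linarith
  have hγ0 : ∀ n, 0 ≤ γ n := fun n => by
    rw [hγ]; exact div_nonneg (hr n) (hSpos n).le
  -- telescoping product
  have key : ∀ n : ℕ, ∏ p ∈ Finset.Ico 1 (n+1), (1 + γ p)
      = 1 + ∑ i ∈ Finset.Ico 1 (n+1), r i := by
    intro n
    induction n with
    | zero => simp
    | succ n ih =>
      rw [Finset.prod_Ico_succ_top (by omega), ih,
        Finset.sum_Ico_succ_top (Nat.le_add_left 1 n), hγ]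
      have h1 := (hSpos (n+1)).ne'
      field_simp
      ring
  have heq : ∀ j : ℕ, γ (j+1) * ∏ p ∈ Finset.Ico 1 (j+1), (1 + γ p) = r (j+1) := by
    intro j
    rw [key, hγ]
    exact div_mul_cancel₀ _ (hSpos (j+1)).ne'
  -- termwise bound
  have hle : ∀ j : ℕ, h (j + 2) * γ (j + 1) * ∏ p ∈ Finset.Ico 1 (j + 1), (c p + γ p)
      ≤ r (j+1) := by
    intro j
    have hrw : h (j + 2) * γ (j + 1) * ∏ p ∈ Finset.Ico 1 (j + 1), (c p + γ p)
        = γ (j+1) * (c (j+1))⁻¹ *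
          ∏ p ∈ Finset.Ico 1 (j + 1), ((c p)⁻¹ * (c p + γ p)) := by
      rw [hh, Finset.prod_Ico_succ_top (Nat.le_add_left 1 j), Finset.prod_mul_distrib]
      ring
    rw [hrw]
    have hP : ∏ p ∈ Finset.Ico 1 (j + 1), ((c p)⁻¹ * (c p + γ p))
        ≤ ∏ p ∈ Finset.Ico 1 (j + 1), (1 + γ p) := by
      apply Finset.prod_le_prod
      · intro p _
        exact mul_nonneg (inv_pos.mpr (hcpos p)).le
          (by have := hγ0 p; have := (hcpos p).le; linarith)
      · intro p _
        have hcp := hcpos p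
        have : (c p)⁻¹ * (c p + γ p) = 1 + γ p / c p := by
          field_simp
        rw [this]
        have : γ p / c p ≤ γ p := div_le_self (hγ0 p) (hc1 p)
        linarith
    have hQ0 : (0:ℝ) ≤ ∏ p ∈ Finset.Ico 1 (j + 1), (1 + γ p) :=
      Finset.prod_nonneg fun p _ => by have := hγ0 p; linarith
    have hci : (c (j+1))⁻¹ ≤ 1 := inv_le_one_of_one_le₀ (hc1 (j+1))
    have hci0 : (0:ℝ) ≤ (c (j+1))⁻¹ := (inv_pos.mpr (hcpos (j+1))).le
    calc γ (j+1) * (c (j+1))⁻¹ * ∏ p ∈ Finset.Ico 1 (j + 1), ((c p)⁻¹ * (c p + γ p))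
        ≤ γ (j+1) * 1 * ∏ p ∈ Finset.Ico 1 (j + 1), (1 + γ p) := by
          apply mul_le_mul
          · exact mul_le_mul_of_nonneg_left hci (hγ0 (j+1))
          · exact hP
          · exact Finset.prod_nonneg fun p _ => mul_nonneg (inv_pos.mpr (hcpos p)).le
              (by have := hγ0 p; have := (hcpos p).le; linarith)
          · have := hγ0 (j+1); positivity
      _ = r (j+1) := by rw [mul_one, heq]
  have h0 : ∀ j : ℕ, 0 ≤ h (j + 2) * γ (j + 1) * ∏ p ∈ Finset.Ico 1 (j + 1), (c p + γ p) := by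
    intro j
    have h1 : 0 ≤ h (j+2) := by
      rw [hh]; exact Finset.prod_nonneg fun p _ => (inv_pos.mpr (hcpos p)).le
    have h2 : (0:ℝ) ≤ ∏ p ∈ Finset.Ico 1 (j + 1), (c p + γ p) :=
      Finset.prod_nonneg fun p _ => by have := hγ0 p; have := (hcpos p).le; linarith
    have := hγ0 (j+1)
    positivity
  have hrs : Summable fun j : ℕ => r (j+1) := by
    simpa using (summable_nat_add_iff 1).2 hrsum
  have hsum : Summable (fun j : ℕ =>
      h (j + 2) * γ (j + 1) * ∏ p ∈ Finset.Ico 1 (j + 1), (c p + γ p)) :=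
    Summable.of_nonneg_of_le h0 hle hrs
  exact ⟨hsum, Summable.tsum_le_tsum hle hsum hrs⟩
end

section
/- Suppose the Green operator satisfies Σ_{j=0}^∞ ‖G(k,j+1)‖·γ(j) ≤ q < 1 for every k, f satisfies |f(k,y) - f(k,ỹ)| ≤ γ(k)|y - ỹ|, and x(·,m,ξ) is a fixed solution sequence. Then the operator Θ on ℓ^∞(ℕ, ℝ^d) defined by (Θφ)(k) = Σ_{j=0}^∞ G(k,j+1)·f(j, x(j,m,ξ) + φ(j)) is a contraction with Lipschitz constant at most q < 1, and hence has a unique fixed point z* ∈ ℓ^∞(ℕ, ℝ^d). -/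
open scoped NNReal BoundedContinuousFunction

/-! Each series defining `Θφ` converges absolutely by the `μ`-bound, and termwise
`‖G(k,j+1)(f(j,x_j+φ_j) - f(j,x_j+ψ_j))‖ ≤ ‖G(k,j+1)‖ γ(j) ‖φ - ψ‖_∞`, so summing over `j` gives
`‖Θφ - Θψ‖_∞ ≤ q ‖φ - ψ‖_∞`. Since `ℓ^∞(ℕ, ℝ^d)` is complete, Banach's fixed point theorem
applies. -/

theorem nonneg_of_norm_sub_le_mul_norm_sub {E F : Type*} [NormedAddCommGroup E] [Nontrivial E]
    [SeminormedAddCommGroup F] {g : E → F} {c : ℝ}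
    (h : ∀ y y', ‖g y - g y'‖ ≤ c * ‖y - y'‖) : 0 ≤ c := by
  obtain ⟨y, hy⟩ := exists_ne (0 : E)
  have := (norm_nonneg _).trans (h y 0)
  rw [sub_zero] at this
  exact nonneg_of_mul_nonneg_left this (norm_pos_iff.2 hy)

section SeriesOfOperators

variable {ι 𝕜 E F : Type*} [NontriviallyNormedField 𝕜] [SeminormedAddCommGroup E]
  [NormedAddCommGroup F] [NormedSpace 𝕜 E] [NormedSpace 𝕜 F]

theorem summable_clm_apply_of_norm_le [CompleteSpace F] {A : ι → E →L[𝕜] F} {v : ι → E}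
    {c : ι → ℝ} (hs : Summable fun j => ‖A j‖ * c j) (hv : ∀ j, ‖v j‖ ≤ c j) :
    Summable fun j => A j (v j) :=
  hs.of_norm_bounded fun j => (A j).le_opNorm_of_le (hv j)

theorem norm_tsum_clm_apply_sub_le {A : ι → E →L[𝕜] F} {v w : ι → E} {c : ι → ℝ} {D : ℝ}
    (hv : Summable fun j => A j (v j)) (hw : Summable fun j => A j (w j))
    (hs : Summable fun j => ‖A j‖ * c j) (hvw : ∀ j, ‖v j - w j‖ ≤ c j * D) :
    ‖∑' j, A j (v j) - ∑' j, A j (w j)‖ ≤ (∑' j, ‖A j‖ * c j) * D := by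
  rw [← hv.tsum_sub hw]
  refine tsum_of_norm_bounded (hs.hasSum.mul_right D) fun j => ?_
  rw [← map_sub, mul_assoc]
  exact (A j).le_opNorm_of_le (hvw j)

end SeriesOfOperators

theorem lipschitzWith_of_tsum_norm_mul_le {𝕜 E F H : Type*} [NontriviallyNormedField 𝕜]
    [SeminormedAddCommGroup E] [SeminormedAddCommGroup F] [NormedAddCommGroup H]
    [NormedSpace 𝕜 F] [NormedSpace 𝕜 H] [CompleteSpace H]
    {G : ℕ → ℕ → F →L[𝕜] H} {f : ℕ → E → F} {γ μ : ℕ → ℝ} {q : ℝ≥0} {x : ℕ → E}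
    {Θ : (ℕ →ᵇ E) → (ℕ →ᵇ H)} (hγ : ∀ j, 0 ≤ γ j)
    (hlip : ∀ k y y', ‖f k y - f k y'‖ ≤ γ k * ‖y - y'‖) (hbound : ∀ k y, ‖f k y‖ ≤ μ k)
    (hGγs : ∀ k, Summable fun j => ‖G k (j + 1)‖ * γ j)
    (hGγ : ∀ k, ∑' j, ‖G k (j + 1)‖ * γ j ≤ q)
    (hGμs : ∀ k, Summable fun j => ‖G k (j + 1)‖ * μ j)
    (hΘ : ∀ φ k, Θ φ k = ∑' j, G k (j + 1) (f j (x j + φ j))) :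
    LipschitzWith q Θ := by
  refine LipschitzWith.of_dist_le_mul fun φ ψ =>
    (BoundedContinuousFunction.dist_le (by positivity)).2 fun k => ?_
  have hsum (χ : ℕ →ᵇ E) : Summable fun j => G k (j + 1) (f j (x j + χ j)) :=
    summable_clm_apply_of_norm_le (hGμs k) fun j => hbound j _
  have hterm (j : ℕ) : ‖f j (x j + φ j) - f j (x j + ψ j)‖ ≤ γ j * dist φ ψ := by
    refine (hlip j _ _).trans (mul_le_mul_of_nonneg_left ?_ (hγ j))
    rw [add_sub_add_left_eq_sub, ← dist_eq_norm]
    exact BoundedContinuousFunction.dist_coe_le_dist j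
  rw [dist_eq_norm, hΘ, hΘ]
  calc _ ≤ (∑' j, ‖G k (j + 1)‖ * γ j) * dist φ ψ :=
        norm_tsum_clm_apply_sub_le (hsum φ) (hsum ψ) (hGγs k) hterm
    _ ≤ q * dist φ ψ := mul_le_mul_of_nonneg_right (hGγ k) dist_nonneg

theorem theta_contraction_fixed_point_general {d : ℕ}
    (G : ℕ → ℕ → (EuclideanSpace ℝ (Fin d) →L[ℝ] EuclideanSpace ℝ (Fin d)))
    (f : ℕ → EuclideanSpace ℝ (Fin d) → EuclideanSpace ℝ (Fin d))
    (γ μ : ℕ → ℝ) (q : ℝ≥0) (hq : q < 1)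
    (hlip : ∀ (k : ℕ) (y y' : EuclideanSpace ℝ (Fin d)),
      ‖f k y - f k y'‖ ≤ γ k * ‖y - y'‖)
    (hbound : ∀ (k : ℕ) (y : EuclideanSpace ℝ (Fin d)), ‖f k y‖ ≤ μ k)
    (hGγs : ∀ k : ℕ, Summable (fun j : ℕ => ‖G k (j + 1)‖ * γ j))
    (hGγ : ∀ k : ℕ, (∑' j : ℕ, ‖G k (j + 1)‖ * γ j) ≤ q)
    (hGμs : ∀ k : ℕ, Summable (fun j : ℕ => ‖G k (j + 1)‖ * μ j))
    (x : ℕ → EuclideanSpace ℝ (Fin d))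
    (Θ : (ℕ →ᵇ EuclideanSpace ℝ (Fin d)) → (ℕ →ᵇ EuclideanSpace ℝ (Fin d)))
    (hΘ : ∀ (φ : ℕ →ᵇ EuclideanSpace ℝ (Fin d)) (k : ℕ),
      Θ φ k = ∑' j : ℕ, G k (j + 1) (f j (x j + φ j))) :
    LipschitzWith q Θ ∧ ∃! z : ℕ →ᵇ EuclideanSpace ℝ (Fin d), Θ z = z := by
  have hΘlip : LipschitzWith q Θ := by
    rcases subsingleton_or_nontrivial (EuclideanSpace ℝ (Fin d)) with hE | hE
    · have : Subsingleton (ℕ →ᵇ EuclideanSpace ℝ (Fin d)) :=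
        DFunLike.coe_injective.subsingleton
      exact fun φ ψ => by simp [Subsingleton.elim φ ψ]
    · exact lipschitzWith_of_tsum_norm_mul_le
        (fun j => nonneg_of_norm_sub_le_mul_norm_sub (hlip j)) hlip hbound hGγs hGγ hGμs hΘ
  have hΘc : ContractingWith q Θ := ⟨hq, hΘlip⟩
  have : Nonempty (ℕ →ᵇ EuclideanSpace ℝ (Fin d)) := ⟨0⟩
  exact ⟨hΘlip, hΘc.fixedPoint Θ, hΘc.fixedPoint_isFixedPt,
    fun _ hz => hΘc.fixedPoint_unique hz⟩

/-- If `Σ_j ‖G(k,j+1)‖γ(j) ≤ q < 1` for every `k`, `f` is `γ`-Lipschitz and `μ`-bounded in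
the second variable with `Σ_j ‖G(k,j+1)‖μ(j) ≤ p < ∞`, then the operator
`(Θφ)(k) = Σ_j G(k,j+1)·f(j, x(j)+φ(j))` on `ℓ^∞(ℕ,ℝ^d)` is a `q`-contraction and has a
unique fixed point. -/
theorem theta_contraction_fixed_point {d : ℕ}
    (G : ℕ → ℕ → (EuclideanSpace ℝ (Fin d) →L[ℝ] EuclideanSpace ℝ (Fin d)))
    (f : ℕ → EuclideanSpace ℝ (Fin d) → EuclideanSpace ℝ (Fin d))
    (γ μ : ℕ → ℝ) (q p : ℝ≥0) (hq : q < 1)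
    (hlip : ∀ (k : ℕ) (y y' : EuclideanSpace ℝ (Fin d)),
      ‖f k y - f k y'‖ ≤ γ k * ‖y - y'‖)
    (hbound : ∀ (k : ℕ) (y : EuclideanSpace ℝ (Fin d)), ‖f k y‖ ≤ μ k)
    (hGγs : ∀ k : ℕ, Summable (fun j : ℕ => ‖G k (j + 1)‖ * γ j))
    (hGγ : ∀ k : ℕ, (∑' j : ℕ, ‖G k (j + 1)‖ * γ j) ≤ q)
    (hGμs : ∀ k : ℕ, Summable (fun j : ℕ => ‖G k (j + 1)‖ * μ j))
    (hGμ : ∀ k : ℕ, (∑' j : ℕ, ‖G k (j + 1)‖ * μ j) ≤ p)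
    (x : ℕ → EuclideanSpace ℝ (Fin d))
    (Θ : (ℕ →ᵇ EuclideanSpace ℝ (Fin d)) → (ℕ →ᵇ EuclideanSpace ℝ (Fin d)))
    (hΘ : ∀ (φ : ℕ →ᵇ EuclideanSpace ℝ (Fin d)) (k : ℕ),
      Θ φ k = ∑' j : ℕ, G k (j + 1) (f j (x j + φ j))) :
    LipschitzWith q Θ ∧ ∃! z : ℕ →ᵇ EuclideanSpace ℝ (Fin d), Θ z = z :=
  theta_contraction_fixed_point_general G f γ μ q hq hlip hbound hGγs hGγ hGμs x Θ hΘ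
end
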